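/- arXiv:1609.09439 — 4 statements merged into one kernel-verified Lean document; each statement's English description precedes it below -/
import Mathlib

section
/- If a flow X has the two-sided limit shadowing property with a gap in an isolated invariant set Λ, then both X and the reversed flow −X have the positive limit shadowing property in Λ. -/
open Filter Topology MeasureTheory Set

variable {M : Type*} [MetricSpace M]

/-- `X` is a continuous flow on `M`. -/
def IsFlow (X : ℝ → M → M) : Prop :=
  Continuous (fun p : ℝ × M => X p.1 p.2) ∧ (∀ x, X 0 x = x) ∧
    ∀ s t : ℝ, ∀ x, X (s + t) x = X s (X t x)

/-- `Λ` is invariant under the flow `X`. -/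
def InvariantSet (X : ℝ → M → M) (Λ : Set M) : Prop := ∀ t : ℝ, X t '' Λ = Λ

/-- `Λ` is an isolated invariant set for `X`. -/
def IsolatedSet (X : ℝ → M → M) (Λ : Set M) : Prop :=
  InvariantSet X Λ ∧ ∃ U : Set M, IsOpen U ∧ Λ = ⋂ t : ℝ, X t '' U

/-- An orientation preserving homeomorphism of `ℝ` fixing `0`. -/
def OrientHomeo (h : ℝ → ℝ) : Prop :=
  Continuous h ∧ StrictMono h ∧ Function.Bijective h ∧ h 0 = 0

/-- Two-sided partial sums: `psumZ t n = s_n = ∑_{i=0}^{n-1} t i` for `n ≥ 0` and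
`psumZ t (-n) = -∑_{i=-n}^{-1} t i` for `n > 0`. -/
noncomputable def psumZ (t : ℤ → ℝ) : ℤ → ℝ := fun n =>
  if 0 ≤ n then ∑ i ∈ Finset.range n.toNat, t (i : ℤ)
  else -∑ i ∈ Finset.range (-n).toNat, t (n + (i : ℤ))

/-- One-sided partial sums. -/
noncomputable def psumN (t : ℕ → ℝ) : ℕ → ℝ := fun n => ∑ i ∈ Finset.range n, t i

/-- The omega-limit set of `x` under the flow `X`. -/
noncomputable def omegaSet (X : ℝ → M → M) (x : M) : Set M :=
  ⋂ T : ℝ, closure ((fun t : ℝ => X t x) '' Set.Ici T)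

/-- The basin of `A`. -/
def basin (X : ℝ → M → M) (A : Set M) : Set M := {x | omegaSet X x ⊆ A}

/-- `A` is an attracting set for the flow `X`. -/
def IsAttracting (X : ℝ → M → M) (A : Set M) : Prop :=
  ∃ U : Set M, IsOpen U ∧ (∀ t : ℝ, 0 < t → X t '' closure U ⊆ U) ∧
    A = ⋂ t ∈ Set.Ici (0 : ℝ), X t '' closure U

/-- `X` is topologically transitive in `Λ`. -/
def TopTransOn (X : ℝ → M → M) (Λ : Set M) : Prop :=
  ∀ U V : Set M, IsOpen U → IsOpen V → (U ∩ Λ).Nonempty → (V ∩ Λ).Nonempty →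
    ∃ t : ℝ, (X t '' (U ∩ Λ) ∩ (V ∩ Λ)).Nonempty

/-- An attractor is a transitive attracting set. -/
def IsAttractor (X : ℝ → M → M) (A : Set M) : Prop := IsAttracting X A ∧ TopTransOn X A

/-- A proper attractor: `∅ ≠ A ⊆ B(A) ⊊ M`. -/
def IsProperAttractor (X : ℝ → M → M) (A : Set M) : Prop :=
  IsAttractor X A ∧ A.Nonempty ∧ A ⊆ basin X A ∧ basin X A ≠ Set.univ

/-- The stable set of `p`. -/
def stableSet (X : ℝ → M → M) (p : M) : Set M :=
  {q | Tendsto (fun s : ℝ => dist (X s p) (X s q)) atTop (𝓝 0)}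

/-- The unstable set of `p`. -/
def unstableSet (X : ℝ → M → M) (p : M) : Set M :=
  {q | Tendsto (fun s : ℝ => dist (X (-s) p) (X (-s) q)) atTop (𝓝 0)}

/-- `X` is chain transitive in `Λ`. -/
def ChainTransitive (X : ℝ → M → M) (Λ : Set M) : Prop :=
  ∀ x ∈ Λ, ∀ y ∈ Λ, ∀ δ : ℝ, 0 < δ → ∃ K : ℕ, ∃ xs : ℕ → M, ∃ ts : ℕ → ℝ,
    xs 0 = x ∧ xs K = y ∧ (∀ i, i ≤ K → xs i ∈ Λ) ∧ (∀ i, i < K → 1 ≤ ts i) ∧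
    ∀ i, i < K → dist (X (ts i) (xs i)) (xs (i + 1)) < δ

/-- `X` has the shadowing property in `Λ`. -/
def ShadowingProp (X : ℝ → M → M) (Λ : Set M) : Prop :=
  ∀ ε : ℝ, 0 < ε → ∃ δ : ℝ, 0 < δ ∧ ∀ x : ℤ → M, ∀ t : ℤ → ℝ,
    (∀ i, x i ∈ Λ) → (∀ i, 1 ≤ t i) → (∀ i, dist (X (t i) (x i)) (x (i + 1)) < δ) →
    ∃ z ∈ Λ, ∃ h : ℝ → ℝ, OrientHomeo h ∧
      ∀ i : ℤ, ∀ τ : ℝ, psumZ t i ≤ τ → τ ≤ psumZ t (i + 1) →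
        dist (X (h τ) z) (X (τ - psumZ t i) (x i)) < ε

/-- A two-sided limit-pseudo orbit: `t i ≥ 1` and `d(X_{t_i}(x_i), x_{i+1}) → 0` as `|i| → ∞`. -/
def TwoSidedLimitPseudoOrbit (X : ℝ → M → M) (x : ℤ → M) (t : ℤ → ℝ) : Prop :=
  (∀ i, 1 ≤ t i) ∧ Tendsto (fun i : ℤ => dist (X (t i) (x i)) (x (i + 1))) cofinite (𝓝 0)

/-- The positive shadowing integral over the `i`-th time block. -/
noncomputable def posLimIntegral (X : ℝ → M → M) (x : ℤ → M) (t : ℤ → ℝ) (z : M)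
    (h : ℝ → ℝ) (i : ℤ) : ℝ :=
  ∫ τ in psumZ t i..psumZ t (i + 1), dist (X (h τ) z) (X (τ - psumZ t i) (x i))

/-- The pseudo orbit `(x, t)` is limit shadowed by `z` with gap `K`. -/
def LimitShadowedWithGap (X : ℝ → M → M) (x : ℤ → M) (t : ℤ → ℝ) (z : M) (K : ℝ) : Prop :=
  Tendsto (fun i : ℕ =>
      ∫ τ in psumZ t i..psumZ t ((i : ℤ) + 1),
        dist (X (τ + K) z) (X (τ - psumZ t i) (x i))) atTop (𝓝 0) ∧
  Tendsto (fun i : ℕ =>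
      ∫ τ in psumZ t (-(i : ℤ))..psumZ t (-(i : ℤ) + 1),
        dist (X τ z) (X (τ - psumZ t (-(i : ℤ))) (x (-(i : ℤ))))) atTop (𝓝 0)

/-- `X` has the (two-sided) limit shadowing property with gap `N` in `Λ`. -/
def TwoSidedLimitShadowingWithGap (X : ℝ → M → M) (Λ : Set M) (N : ℝ) : Prop :=
  ∀ x : ℤ → M, ∀ t : ℤ → ℝ, (∀ i, x i ∈ Λ) → TwoSidedLimitPseudoOrbit X x t →
    ∃ z ∈ Λ, ∃ K : ℝ, |K| ≤ N ∧ LimitShadowedWithGap X x t z K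

/-- `X` has the positive limit shadowing property in `Λ`. -/
def PosLimitShadowing (X : ℝ → M → M) (Λ : Set M) : Prop :=
  ∀ x : ℕ → M, ∀ t : ℕ → ℝ, (∀ i, x i ∈ Λ) → (∀ i, 1 ≤ t i) →
    Tendsto (fun i : ℕ => dist (X (t i) (x i)) (x (i + 1))) atTop (𝓝 0) →
    ∃ z ∈ Λ, ∃ h : ℝ → ℝ, OrientHomeo h ∧
      Tendsto (fun i : ℕ =>
          ∫ τ in psumN t i..psumN t (i + 1),
            dist (X (h τ) z) (X (τ - psumN t i) (x i))) atTop (𝓝 0)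

/-- `X` has the (two-sided) limit shadowing property in `Λ`. -/
def LimitShadowing (X : ℝ → M → M) (Λ : Set M) : Prop :=
  ∀ x : ℤ → M, ∀ t : ℤ → ℝ, (∀ i, x i ∈ Λ) → TwoSidedLimitPseudoOrbit X x t →
    ∃ z ∈ Λ, ∃ h : ℝ → ℝ, OrientHomeo h ∧
      Tendsto (fun i : ℕ => posLimIntegral X x t z h i) atTop (𝓝 0) ∧
      Tendsto (fun i : ℕ =>
          ∫ τ in psumZ t (-(i : ℤ))..psumZ t (-(i : ℤ) + 1),
            dist (X (h τ) z) (X (τ - psumZ t (-(i : ℤ))) (x (-(i : ℤ))))) atTop (𝓝 0)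

/-- A `δ`-average-pseudo orbit. -/
def AvgPseudoOrbit (X : ℝ → M → M) (x : ℤ → M) (t : ℤ → ℝ) (δ : ℝ) : Prop :=
  (∀ i, 1 ≤ t i) ∧ ∃ N : ℕ, 0 < N ∧ ∀ n : ℕ, N ≤ n → ∀ k : ℤ,
    (1 / (n : ℝ)) * ∑ i ∈ Finset.Icc 1 n,
      dist (X (t ((i : ℤ) + k)) (x ((i : ℤ) + k))) (x ((i : ℤ) + k + 1)) < δ

/-- Positive Cesàro averages of shadowing integrals. -/
noncomputable def avgPosSeq (X : ℝ → M → M) (x : ℤ → M) (t : ℤ → ℝ) (z : M)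
    (h : ℝ → ℝ) (n : ℕ) : ℝ :=
  (1 / (n : ℝ)) * ∑ i ∈ Finset.Icc 1 n,
    ∫ τ in psumZ t i..psumZ t ((i : ℤ) + 1), dist (X (h τ) z) (X (τ - psumZ t i) (x i))

/-- Negative Cesàro averages of shadowing integrals. -/
noncomputable def avgNegSeq (X : ℝ → M → M) (x : ℤ → M) (t : ℤ → ℝ) (z : M)
    (h : ℝ → ℝ) (n : ℕ) : ℝ :=
  (1 / (n : ℝ)) * ∑ i ∈ Finset.Icc 1 n,
    ∫ τ in psumZ t (-(i : ℤ))..psumZ t (-(i : ℤ) + 1),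
      dist (X (h τ) z) (X (τ - psumZ t (-(i : ℤ))) (x (-(i : ℤ))))

/-- `X` has the average shadowing property in `Λ`. -/
def AvgShadowing (X : ℝ → M → M) (Λ : Set M) : Prop :=
  ∀ ε : ℝ, 0 < ε → ∃ δ : ℝ, 0 < δ ∧ ∀ x : ℤ → M, ∀ t : ℤ → ℝ,
    (∀ i, x i ∈ Λ) → AvgPseudoOrbit X x t δ →
    ∃ z ∈ Λ, ∃ h : ℝ → ℝ, OrientHomeo h ∧
      limsup (avgPosSeq X x t z h) atTop < ε ∧ limsup (avgNegSeq X x t z h) atTop < ε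

/-- An asymptotic average-pseudo orbit. -/
def AsympAvgPseudoOrbit (X : ℝ → M → M) (x : ℤ → M) (t : ℤ → ℝ) : Prop :=
  (∀ i, 1 ≤ t i) ∧ Tendsto (fun n : ℕ =>
    (1 / (n : ℝ)) * ∑ i ∈ Finset.Icc (-(n : ℤ)) (n : ℤ), dist (X (t i) (x i)) (x (i + 1)))
    atTop (𝓝 0)

/-- Positive Cesàro averages (`i = 0, …, n`) of shadowing integrals. -/
noncomputable def asympPosSeq (X : ℝ → M → M) (x : ℤ → M) (t : ℤ → ℝ) (z : M)
    (h : ℝ → ℝ) (n : ℕ) : ℝ :=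
  (1 / (n : ℝ)) * ∑ i ∈ Finset.range (n + 1),
    ∫ τ in psumZ t i..psumZ t ((i : ℤ) + 1), dist (X (h τ) z) (X (τ - psumZ t i) (x i))

/-- Negative Cesàro averages (`i = 0, …, n`) of shadowing integrals. -/
noncomputable def asympNegSeq (X : ℝ → M → M) (x : ℤ → M) (t : ℤ → ℝ) (z : M)
    (h : ℝ → ℝ) (n : ℕ) : ℝ :=
  (1 / (n : ℝ)) * ∑ i ∈ Finset.range (n + 1),
    ∫ τ in psumZ t (-(i : ℤ))..psumZ t (-(i : ℤ) + 1),
      dist (X (h τ) z) (X (τ - psumZ t (-(i : ℤ))) (x (-(i : ℤ))))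

/-- `X` has the asymptotic average shadowing property in `Λ`. -/
def AsympAvgShadowing (X : ℝ → M → M) (Λ : Set M) : Prop :=
  ∀ x : ℤ → M, ∀ t : ℤ → ℝ, (∀ i, x i ∈ Λ) → AsympAvgPseudoOrbit X x t →
    ∃ z ∈ Λ, ∃ h : ℝ → ℝ, OrientHomeo h ∧
      Tendsto (asympPosSeq X x t z h) atTop (𝓝 0) ∧
      Tendsto (asympNegSeq X x t z h) atTop (𝓝 0)

/-- A critical orbit: the orbit of a periodic point or a singularity. -/
def IsCriticalOrbit (X : ℝ → M → M) (C : Set M) : Prop :=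
  ∃ p : M, (∃ T : ℝ, 0 < T ∧ X T p = p) ∧ C = Set.range fun s : ℝ => X s p

private lemma flow_comp (X : ℝ → M → M) (hX : IsFlow X) (s t : ℝ) (x : M) :
    X s (X t x) = X (s + t) x := (hX.2.2 s t x).symm

private lemma flow_mem (X : ℝ → M → M) {Λ : Set M} (hΛ : InvariantSet X Λ) (t : ℝ) {x : M}
    (hx : x ∈ Λ) : X t x ∈ Λ := by
  rw [← hΛ t]
  exact ⟨x, hx, rfl⟩

private lemma int_tendsto_cofinite {f : ℤ → ℝ}
    (h0 : Tendsto (fun n : ℕ => f (-(n : ℤ))) atTop (𝓝 0))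
    (h1 : Tendsto (fun n : ℕ => f (n : ℤ)) atTop (𝓝 0)) :
    Tendsto f cofinite (𝓝 (0 : ℝ)) := by
  rw [Int.cofinite_eq, tendsto_sup]
  constructor
  · have htn : Tendsto Int.toNat atTop atTop :=
      tendsto_atTop_atTop.2 fun b => ⟨(b : ℤ), fun a ha => by omega⟩
    have hneg : Tendsto (fun i : ℤ => (-i).toNat) atBot atTop :=
      htn.comp tendsto_neg_atBot_atTop
    refine (h0.comp hneg).congr' ?_
    filter_upwards [eventually_le_atBot (0 : ℤ)] with i hi
    simp only [Function.comp]
    congr 1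
    omega
  · have htn : Tendsto Int.toNat atTop atTop :=
      tendsto_atTop_atTop.2 fun b => ⟨(b : ℤ), fun a ha => by omega⟩
    refine (h1.comp htn).congr' ?_
    filter_upwards [eventually_ge_atTop (0 : ℤ)] with i hi
    simp only [Function.comp]
    congr 1
    omega

/-- the two-sided limit shadowing property with a gap implies that both `X`
and the reversed flow `-X` have the positive limit shadowing property in `Λ`. -/
theorem gap_implies_posLimitShadowing [CompactSpace M]
    (X : ℝ → M → M) (Λ : Set M) (hX : IsFlow X) (hΛ : IsolatedSet X Λ)
    (hgap : ∃ N : ℝ, 0 ≤ N ∧ TwoSidedLimitShadowingWithGap X Λ N) :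
    PosLimitShadowing X Λ ∧ PosLimitShadowing (fun s x => X (-s) x) Λ := by
  obtain ⟨N, -, hN⟩ := hgap
  have hinv : InvariantSet X Λ := hΛ.1
  have hid : OrientHomeo (id : ℝ → ℝ) :=
    ⟨continuous_id, strictMono_id, Function.bijective_id, rfl⟩
  constructor
  · -- positive limit shadowing for X
    intro x t hx ht hd
    set x' : ℤ → M := fun i => if 0 ≤ i then x i.toNat else X (i : ℝ) (x 0) with hx'def
    set t' : ℤ → ℝ := fun i => if 0 ≤ i then t i.toNat else 1 with ht'def
    have hx'Λ : ∀ i, x' i ∈ Λ := by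
      intro i
      by_cases hi : 0 ≤ i
      · simp only [hx'def, if_pos hi]; exact hx _
      · simp only [hx'def, if_neg hi]; exact flow_mem X hinv _ (hx 0)
    have ht'nat : ∀ n : ℕ, t' (n : ℤ) = t n := by
      intro n; simp [ht'def]
    have hx'nat : ∀ n : ℕ, x' (n : ℤ) = x n := by
      intro n; simp [hx'def]
    have hsum : ∀ n : ℕ, psumZ t' (n : ℤ) = psumN t n := by
      intro n
      simp only [psumZ]
      rw [if_pos (Int.natCast_nonneg n)]
      simp only [Int.toNat_natCast, psumN]
      exact Finset.sum_congr rfl fun j _ => ht'nat j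
    have hpo : TwoSidedLimitPseudoOrbit X x' t' := by
      constructor
      · intro i
        by_cases hi : 0 ≤ i <;> simp [ht'def, hi, ht _]
      · apply int_tendsto_cofinite
        · refine tendsto_const_nhds.congr' ?_
          filter_upwards [eventually_ge_atTop 2] with n hn
          have h1 : ¬ (0 ≤ -(n : ℤ)) := by omega
          have h2 : ¬ (0 ≤ -(n : ℤ) + 1) := by omega
          simp only [hx'def, ht'def, if_neg h1, if_neg h2]
          rw [flow_comp X hX]
          push_cast
          rw [show (1 : ℝ) + -(n : ℝ) = -(n : ℝ) + 1 by ring]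
          exact (dist_self _).symm
        · refine hd.congr fun n => ?_
          rw [ht'nat, hx'nat, show ((n : ℤ) + 1) = ((n + 1 : ℕ) : ℤ) by push_cast; ring,
            hx'nat]
    obtain ⟨z, hz, K, -, hposK, -⟩ := hN x' t' hx'Λ hpo
    refine ⟨X K z, flow_mem X hinv K hz, id, hid, ?_⟩
    refine hposK.congr fun n => ?_
    have hb2 : psumZ t' ((n : ℤ) + 1) = psumN t (n + 1) := by
      rw [show ((n : ℤ) + 1) = ((n + 1 : ℕ) : ℤ) by push_cast; ring, hsum]
    rw [hb2, hsum]
    refine intervalIntegral.integral_congr fun τ _ => ?_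
    rw [hx'nat, id_eq, flow_comp X hX]
  · -- positive limit shadowing for the reversed flow
    intro y t hy ht hd
    set S : ℕ → ℝ := psumN t with hSdef
    set x' : ℤ → M := fun i =>
      if 0 ≤ i then X (i : ℝ) (y 0) else X (-(t (-i - 1).toNat)) (y (-i - 1).toNat)
      with hx'def
    set t' : ℤ → ℝ := fun i => if 0 ≤ i then 1 else t (-i - 1).toNat with ht'def
    have hx'Λ : ∀ i, x' i ∈ Λ := by
      intro i
      by_cases hi : 0 ≤ i
      · simp only [hx'def, if_pos hi]; exact flow_mem X hinv _ (hy 0)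
      · simp only [hx'def, if_neg hi]; exact flow_mem X hinv _ (hy _)
    have hsumneg : ∀ n : ℕ, psumZ t' (-(n : ℤ)) = -(S n) := by
      intro n
      rcases Nat.eq_zero_or_pos n with h | h
      · subst h; simp [psumZ, psumN, hSdef]
      · have hneg : ¬ ((0:ℤ) ≤ -(n : ℤ)) := by omega
        simp only [psumZ]
        rw [if_neg hneg]
        have : ∀ j ∈ Finset.range ((-(-(n : ℤ))).toNat), t' (-(n : ℤ) + (j : ℤ))
            = t (n - 1 - j) := by
          intro j hj
          rw [Finset.mem_range] at hj
          have hj' : j < n := by omega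
          rw [ht'def]
          simp only
          rw [if_neg (by omega)]
          congr 1
          omega
        rw [Finset.sum_congr rfl this]
        have : (-(-(n : ℤ))).toNat = n := by omega
        rw [this, Finset.sum_range_reflect]
        rfl
    have hpo : TwoSidedLimitPseudoOrbit X x' t' := by
      constructor
      · intro i
        by_cases hi : 0 ≤ i <;> simp [ht'def, hi, ht _]
      · apply int_tendsto_cofinite
        · have key : ∀ n : ℕ, 2 ≤ n →
              dist (X (t' (-(n : ℤ))) (x' (-(n : ℤ)))) (x' (-(n : ℤ) + 1))
              = dist (X (-(t (n - 2))) (y (n - 2))) (y (n - 2 + 1)) := by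
            intro n hn
            have h1 : ¬ (0 ≤ -(n : ℤ)) := by omega
            have h2 : ¬ (0 ≤ -(n : ℤ) + 1) := by omega
            simp only [hx'def, ht'def, if_neg h1, if_neg h2]
            have e1 : (-(-(n : ℤ)) - 1).toNat = n - 1 := by omega
            have e2 : (-(-(n : ℤ) + 1) - 1).toNat = n - 2 := by omega
            rw [e1, e2, flow_comp X hX, add_neg_cancel, hX.2.1]
            rw [show n - 1 = n - 2 + 1 by omega]
            exact dist_comm _ _
          have := hd.comp (tendsto_sub_atTop_nat 2)
          refine this.congr' ?_
          filter_upwards [eventually_ge_atTop 2] with n hn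
          exact (key n hn).symm
        · refine tendsto_const_nhds.congr' ?_
          filter_upwards [eventually_ge_atTop 0] with n hn
          have h1 : (0 : ℤ) ≤ (n : ℤ) := by omega
          have h2 : (0 : ℤ) ≤ (n : ℤ) + 1 := by omega
          simp only [hx'def, ht'def, if_pos h1, if_pos h2]
          rw [flow_comp X hX]
          push_cast
          rw [show (1 : ℝ) + (n : ℝ) = (n : ℝ) + 1 by ring]
          exact (dist_self _).symm
    obtain ⟨z, hz, K, -, -, hnegK⟩ := hN x' t' hx'Λ hpo
    refine ⟨z, hz, id, hid, ?_⟩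
    have hF := hnegK.comp (tendsto_add_atTop_nat 1)
    refine hF.congr' ?_
    filter_upwards with n
    simp only [Function.comp]
    have hS1 : S (n + 1) = S n + t n := by
      simp [hSdef, psumN, Finset.sum_range_succ]
    have eb1 : psumZ t' (-(((n + 1 : ℕ)) : ℤ)) = -(S (n + 1)) := hsumneg (n + 1)
    have eb2 : psumZ t' (-(((n + 1 : ℕ)) : ℤ) + 1) = -(S n) := by
      rw [show (-(((n + 1 : ℕ)) : ℤ) + 1) = -((n : ℕ) : ℤ) by push_cast; ring]
      exact hsumneg n
    have ex : x' (-(((n + 1 : ℕ)) : ℤ)) = X (-(t n)) (y n) := by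
      have h1 : ¬ ((0:ℤ) ≤ -(((n + 1 : ℕ)) : ℤ)) := by omega
      have h2 : (-(-(((n + 1 : ℕ)) : ℤ)) - 1).toNat = n := by omega
      simp only [hx'def, if_neg h1, h2]
    rw [eb1, eb2, ex]
    have hint : (∫ τ in -(S (n + 1))..(-(S n)),
        dist (X τ z) (X (τ - -(S (n + 1))) (X (-(t n)) (y n))))
        = ∫ σ in S n..S (n + 1),
          dist (X (-σ) z) (X ((-σ) - -(S (n + 1))) (X (-(t n)) (y n))) := by
      rw [← intervalIntegral.integral_comp_neg
        (fun τ => dist (X τ z) (X (τ - -(S (n + 1))) (X (-(t n)) (y n))))]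
    rw [hint]
    refine (intervalIntegral.integral_congr fun σ _ => ?_).symm
    simp only [id_eq]
    rw [flow_comp X hX, show -(σ - S n) = -σ - -S (n + 1) + -t n by rw [hS1]; ring]
end

section
/- If a flow X has the two-sided limit shadowing property with gap N in an isolated invariant set Λ, then for every x, y ∈ Λ there exists K ∈ ℝ with |K| ≤ N such that the stable set of X_{−K}(x) intersects the unstable set of y, i.e., W^s(X_{−K}(x)) ∩ W^u(y) ≠ ∅. -/
open Filter Topology MeasureTheory Set

variable {M : Type*} [MetricSpace M]

/-! The pseudo-orbit that follows the orbit of `y` in negative time and the orbit of `x` in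
nonnegative time, with unit time steps, has a single jump and is therefore a two-sided
limit-pseudo orbit. A point `z` shadowing it with gap `K` has shadowing integrals over unit
time blocks tending to `0` in both directions. For a flow on a compact space, orbit distances
are uniformly continuous in time, so these integrals tend to `0` only if the distances
themselves do: `z` is forward asymptotic to the orbit of `X_{-K}(x)` and backward asymptotic
to the orbit of `y`. -/

theorem tendsto_zero_of_tendsto_integral_unit_intervals {g : ℝ → ℝ} (hg0 : 0 ≤ g)
    (hg : UniformContinuous g)
    (hint : Tendsto (fun n : ℕ => ∫ τ in n..n + 1, g τ) atTop (𝓝 0)) :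
    Tendsto g atTop (𝓝 0) := by
  have hgi : ∀ a b : ℝ, IntervalIntegrable g volume a b := hg.continuous.intervalIntegrable
  have htwo : Tendsto (fun τ : ℝ => ∫ u in (⌊τ⌋₊ : ℝ)..⌊τ⌋₊ + 2, g u) atTop (𝓝 0) := by
    have hsum := (hint.add (hint.comp (tendsto_add_atTop_nat 1))).comp
      (tendsto_nat_floor_atTop (α := ℝ))
    rw [add_zero] at hsum
    refine hsum.congr fun τ => ?_
    simp only [Function.comp_apply, Nat.cast_add, Nat.cast_one, add_assoc, one_add_one_eq_two]
    exact intervalIntegral.integral_add_adjacent_intervals (hgi _ _) (hgi _ _)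
  refine Metric.tendsto_nhds.2 fun ε hε => ?_
  obtain ⟨δ, hδ, hgδ⟩ := Metric.uniformContinuous_iff.1 hg (ε / 2) (half_pos hε)
  set η := min (δ / 2) 1
  have hη : 0 < η := by positivity
  have hηε : 0 < η * (ε / 2) := by positivity
  filter_upwards [eventually_ge_atTop 0, htwo.eventually (gt_mem_nhds hηε)] with τ hτ hsmall
  have hlower : η * (g τ - ε / 2) ≤ ∫ u in τ..τ + η, g u := by
    have hnear : ∀ u ∈ Icc τ (τ + η), g τ - ε / 2 ≤ g u := fun u hu => by
      have hdist : dist u τ < δ := by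
        rw [Real.dist_eq, abs_lt]
        constructor <;> linarith [hu.1, hu.2, min_le_left (δ / 2) 1]
      linarith [(abs_lt.1 (Real.dist_eq (g u) (g τ) ▸ hgδ hdist)).1]
    have hmono := intervalIntegral.integral_mono_on (f := fun _ => g τ - ε / 2) (by linarith)
      intervalIntegrable_const (hgi τ (τ + η)) hnear
    rwa [intervalIntegral.integral_const, smul_eq_mul, add_sub_cancel_left] at hmono
  have hupper : ∫ u in τ..τ + η, g u ≤ ∫ u in (⌊τ⌋₊ : ℝ)..⌊τ⌋₊ + 2, g u :=
    intervalIntegral.integral_mono_interval (Nat.floor_le hτ) (by linarith)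
      (by linarith [Nat.lt_floor_add_one τ, min_le_right (δ / 2) 1])
      (Eventually.of_forall fun u => hg0 u) (hgi _ _)
  rw [Real.dist_0_eq_abs, abs_of_nonneg (hg0 τ)]
  nlinarith

theorem stableSet_reverse (X : ℝ → M → M) (p : M) :
    stableSet (fun t => X (-t)) p = unstableSet X p :=
  rfl

namespace IsFlow

variable {X : ℝ → M → M}

theorem reverse (hX : IsFlow X) : IsFlow fun t => X (-t) :=
  ⟨hX.1.comp (continuous_neg.prodMap continuous_id),
    fun x => show X (-0) x = x by rw [neg_zero, hX.2.1],
    fun s t x => show X (-(s + t)) x = X (-s) (X (-t) x) by rw [neg_add, hX.2.2]⟩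

theorem eventually_forall_dist_lt [CompactSpace M] (hX : IsFlow X) {ε : ℝ} (hε : 0 < ε) :
    ∀ᶠ s in 𝓝 (0 : ℝ), ∀ w, dist (X s w) w < ε := by
  have hΦ : Continuous fun p : ℝ × M => dist (X p.1 p.2) p.2 := hX.1.dist continuous_snd
  simpa using isCompact_univ.eventually_forall_of_forall_eventually fun w _ =>
    (hΦ.tendsto ((0 : ℝ), w)).eventually (gt_mem_nhds (by simpa [hX.2.1] using hε))

theorem uniformContinuous_orbit [CompactSpace M] (hX : IsFlow X) (w : M) :
    UniformContinuous fun t => X t w := by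
  refine Metric.uniformContinuous_iff.2 fun ε hε => ?_
  obtain ⟨δ, hδ, hsmall⟩ := Metric.eventually_nhds_iff.1 (hX.eventually_forall_dist_lt hε)
  refine ⟨δ, hδ, fun a b hab => ?_⟩
  have hshift : X a w = X (a - b) (X b w) := by rw [← hX.2.2, sub_add_cancel]
  rw [hshift]
  exact hsmall (by rwa [Real.dist_eq, sub_zero, ← Real.dist_eq]) _

theorem mem_stableSet_of_tendsto_integral [CompactSpace M] (hX : IsFlow X) {K : ℝ} {x z : M}
    (h : Tendsto (fun n : ℕ => ∫ τ in n..n + 1, dist (X (τ + K) z) (X τ x)) atTop (𝓝 0)) :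
    z ∈ stableSet X (X (-K) x) := by
  have hg : UniformContinuous fun τ => dist (X (τ + K) z) (X τ x) :=
    ((hX.uniformContinuous_orbit z).comp (uniformContinuous_id.add uniformContinuous_const)).dist
      (hX.uniformContinuous_orbit x)
  have hlim := (tendsto_zero_of_tendsto_integral_unit_intervals (fun _ => dist_nonneg) hg h).comp
    (tendsto_atTop_add_const_right atTop (-K) tendsto_id)
  refine hlim.congr fun s => ?_
  simp only [Function.comp_apply, id, ← hX.2.2, ← sub_eq_add_neg, sub_add_cancel]
  exact dist_comm _ _

theorem mem_unstableSet_of_tendsto_integral [CompactSpace M] (hX : IsFlow X) {y z : M}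
    (h : Tendsto (fun n : ℕ => ∫ τ in n..n + 1, dist (X (-τ) z) (X (-τ) y)) atTop (𝓝 0)) :
    z ∈ unstableSet X y := by
  have hrev := hX.reverse.mem_stableSet_of_tendsto_integral (K := 0) (x := y) (z := z)
    (by simpa only [add_zero] using h)
  rwa [neg_zero, neg_zero, hX.2.1, stableSet_reverse] at hrev

end IsFlow

theorem psumZ_const_one (n : ℤ) : psumZ (fun _ => 1) n = n := by
  unfold psumZ
  split_ifs with hn <;> simp only [Finset.sum_const, Finset.card_range, nsmul_eq_mul, mul_one]
  · exact_mod_cast Int.toNat_of_nonneg hn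
  · rw [neg_eq_iff_eq_neg]
    exact_mod_cast Int.toNat_of_nonneg (by omega)

def concatOrbit {α : Type*} (X : ℝ → α → α) (y x : α) (i : ℤ) : α :=
  if i < 0 then X i y else X i x

theorem concatOrbit_mem {α : Type*} {X : ℝ → α → α} {Λ : Set α} (hΛ : InvariantSet X Λ)
    {x y : α} (hx : x ∈ Λ) (hy : y ∈ Λ) (i : ℤ) : concatOrbit X y x i ∈ Λ := by
  unfold concatOrbit
  split_ifs
  · exact hΛ i ▸ mem_image_of_mem _ hy
  · exact hΛ i ▸ mem_image_of_mem _ hx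

theorem twoSidedLimitPseudoOrbit_concatOrbit {X : ℝ → M → M} (hX : IsFlow X) (x y : M) :
    TwoSidedLimitPseudoOrbit X (concatOrbit X y x) fun _ => 1 := by
  refine ⟨fun _ => le_rfl, tendsto_const_nhds.congr' ?_⟩
  have hstep : ∀ i : ℤ, i ≠ -1 → X 1 (concatOrbit X y x i) = concatOrbit X y x (i + 1) := by
    intro i hi
    unfold concatOrbit
    by_cases hneg : i < 0
    · rw [if_pos hneg, if_pos (by omega), ← hX.2.2, Int.cast_add, Int.cast_one, add_comm]
    · rw [if_neg hneg, if_neg (by omega), ← hX.2.2, Int.cast_add, Int.cast_one, add_comm]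
  filter_upwards [eventually_cofinite_ne (-1)] with i hi
  rw [hstep i hi, dist_self]

theorem integral_concatOrbit_natCast {X : ℝ → M → M} (hX : IsFlow X) (x y z : M) (K : ℝ)
    (n : ℕ) :
    ∫ τ in psumZ (fun _ => 1) n..psumZ (fun _ => 1) ((n : ℤ) + 1),
        dist (X (τ + K) z) (X (τ - psumZ (fun _ => 1) n) (concatOrbit X y x n)) =
      ∫ τ in n..n + 1, dist (X (τ + K) z) (X τ x) := by
  simp only [psumZ_const_one, concatOrbit, if_neg (Int.natCast_nonneg n).not_gt, ← hX.2.2,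
    sub_add_cancel, Int.cast_add, Int.cast_natCast, Int.cast_one]

theorem integral_concatOrbit_neg_succ {X : ℝ → M → M} (hX : IsFlow X) (x y z : M) (n : ℕ) :
    ∫ τ in psumZ (fun _ => 1) (-((n + 1 : ℕ) : ℤ))..psumZ (fun _ => 1) (-((n + 1 : ℕ) : ℤ) + 1),
        dist (X τ z) (X (τ - psumZ (fun _ => 1) (-((n + 1 : ℕ) : ℤ)))
          (concatOrbit X y x (-((n + 1 : ℕ) : ℤ)))) =
      ∫ τ in n..n + 1, dist (X (-τ) z) (X (-τ) y) := by
  rw [intervalIntegral.integral_comp_neg (fun τ => dist (X τ z) (X τ y))]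
  simp only [psumZ_const_one, concatOrbit, if_pos (by omega : -((n + 1 : ℕ) : ℤ) < 0),
    ← hX.2.2, sub_add_cancel]
  push_cast
  ring_nf

theorem gap_stable_meets_unstable_general [CompactSpace M]
    (X : ℝ → M → M) (Λ : Set M) (N : ℝ) (hX : IsFlow X) (hΛ : IsolatedSet X Λ)
    (hgap : TwoSidedLimitShadowingWithGap X Λ N) :
    ∀ x ∈ Λ, ∀ y ∈ Λ, ∃ K : ℝ, |K| ≤ N ∧
      (stableSet X (X (-K) x) ∩ unstableSet X y).Nonempty := by
  intro x hx y hy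
  obtain ⟨z, -, K, hKN, hforward, hbackward⟩ := hgap (concatOrbit X y x) (fun _ => 1)
    (concatOrbit_mem hΛ.1 hx hy) (twoSidedLimitPseudoOrbit_concatOrbit hX x y)
  refine ⟨K, hKN, z, hX.mem_stableSet_of_tendsto_integral ?_,
    hX.mem_unstableSet_of_tendsto_integral ?_⟩
  · exact hforward.congr (integral_concatOrbit_natCast hX x y z K)
  · exact (hbackward.comp (tendsto_add_atTop_nat 1)).congr
      (integral_concatOrbit_neg_succ hX x y z)

/-- under the two-sided limit shadowing property with gap `N`, stable and
unstable sets of points of `Λ` intersect, up to a time shift `K` with `|K| ≤ N`. -/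
theorem gap_stable_meets_unstable [CompactSpace M]
    (X : ℝ → M → M) (Λ : Set M) (N : ℝ) (hX : IsFlow X) (hΛ : IsolatedSet X Λ)
    (hN : 0 ≤ N) (hgap : TwoSidedLimitShadowingWithGap X Λ N) :
    ∀ x ∈ Λ, ∀ y ∈ Λ, ∃ K : ℝ, |K| ≤ N ∧
      (stableSet X (X (-K) x) ∩ unstableSet X y).Nonempty :=
  gap_stable_meets_unstable_general X Λ N hX hΛ hgap
end

section
/- If a flow X on an isolated invariant set Λ is chain transitive and has the shadowing property in Λ, then X is topologically transitive in Λ. -/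
open Filter Topology MeasureTheory Set

variable {M : Type*} [MetricSpace M]

lemma psumZ_step' (t : ℤ → ℝ) (i : ℤ) (hi : 0 ≤ i) :
    psumZ t (i + 1) = psumZ t i + t i := by
  simp only [psumZ, if_pos hi, if_pos (by omega : (0:ℤ) ≤ i + 1)]
  have h1 : (i + 1).toNat = i.toNat + 1 := by omega
  rw [h1, Finset.sum_range_succ, Int.toNat_of_nonneg hi]

/-- chain transitivity together with the shadowing property in `Λ`
implies topological transitivity in `Λ`. -/
theorem chainTransitive_shadowing_topTrans [CompactSpace M]
    (X : ℝ → M → M) (Λ : Set M) (hX : IsFlow X) (hΛ : IsolatedSet X Λ)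
    (hcomp : IsCompact Λ) (hct : ChainTransitive X Λ) (hsh : ShadowingProp X Λ) :
    TopTransOn X Λ := by
  rintro U V hU hV ⟨u, huU, huΛ⟩ ⟨v, hvV, hvΛ⟩
  obtain ⟨ε1, hε1, hball1⟩ := Metric.isOpen_iff.1 hU u huU
  obtain ⟨ε2, hε2, hball2⟩ := Metric.isOpen_iff.1 hV v hvV
  set ε := min ε1 ε2 with hεdef
  have hεpos : 0 < ε := lt_min hε1 hε2
  obtain ⟨δ, hδ, hshad⟩ := hsh ε hεpos
  have hinv := hΛ.1
  have hXuΛ : X 1 u ∈ Λ := by rw [← hinv 1]; exact ⟨u, huΛ, rfl⟩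
  have hXvΛ : X 1 v ∈ Λ := by rw [← hinv 1]; exact ⟨v, hvΛ, rfl⟩
  obtain ⟨K1, xs1, ts1, hx10, hx1K, hx1Λ, ht1, hchain1⟩ := hct (X 1 u) hXuΛ v hvΛ δ hδ
  obtain ⟨K2, xs2, ts2, hx20, hx2K, hx2Λ, ht2, hchain2⟩ := hct (X 1 v) hXvΛ u huΛ δ hδ
  set P : ℕ := K1 + K2 + 2 with hPdef
  have hP2 : 2 ≤ P := by omega
  set seq : ℕ → M := fun j =>
    if j = 0 then u else if j ≤ K1 + 1 then xs1 (j - 1)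
    else if j ≤ P then xs2 (j - (K1 + 2)) else u with hseq
  set tsq : ℕ → ℝ := fun j =>
    if j = 0 then 1 else if j ≤ K1 then ts1 (j - 1)
    else if j = K1 + 1 then 1 else if j ≤ P - 1 then ts2 (j - (K1 + 2)) else 1 with htsq
  have hseq0 : seq 0 = u := by simp [hseq]
  have hseqP : seq P = u := by
    simp only [hseq]
    rw [if_neg (by omega), if_neg (by omega), if_pos le_rfl]
    rw [show P - (K1 + 2) = K2 by omega, hx2K]
  have hseqv : seq (K1 + 1) = v := by
    simp only [hseq]
    rw [if_neg (by omega), if_pos le_rfl]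
    rw [show K1 + 1 - 1 = K1 by omega, hx1K]
  have hseqΛ : ∀ j, seq j ∈ Λ := by
    intro j
    simp only [hseq]
    split_ifs with h1 h2 h3
    · exact huΛ
    · exact hx1Λ (j - 1) (by omega)
    · exact hx2Λ (j - (K1 + 2)) (by omega)
    · exact huΛ
  have htsq1 : ∀ j, 1 ≤ tsq j := by
    intro j
    simp only [htsq]
    split_ifs with h1 h2 h3 h4
    · exact le_rfl
    · exact ht1 (j - 1) (by omega)
    · exact le_rfl
    · exact ht2 (j - (K1 + 2)) (by omega)
    · exact le_rfl
  have hstep : ∀ j, j < P → dist (X (tsq j) (seq j)) (seq (j + 1)) < δ := by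
    intro j hj
    rcases Nat.eq_zero_or_pos j with rfl | hj0
    · have h2 : seq 1 = X 1 u := by
        simp only [hseq]; rw [if_neg (by omega), if_pos (by omega)]; simpa using hx10
      have h3 : tsq 0 = 1 := by simp [htsq]
      rw [hseq0, h2, h3, dist_self]
      exact hδ
    · by_cases hjK : j ≤ K1
      · have h1 : seq j = xs1 (j - 1) := by
          simp only [hseq]; rw [if_neg (by omega), if_pos (by omega)]
        have h2 : seq (j + 1) = xs1 j := by
          simp only [hseq]; rw [if_neg (by omega), if_pos (by omega)]
          congr 1 <;> omega
        have h3 : tsq j = ts1 (j - 1) := by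
          simp only [htsq]; rw [if_neg (by omega), if_pos hjK]
        rw [h1, h2, h3]
        have := hchain1 (j - 1) (by omega)
        rwa [show j - 1 + 1 = j by omega] at this
      · by_cases hjv : j = K1 + 1
        · subst hjv
          have h2 : seq (K1 + 1 + 1) = X 1 v := by
            simp only [hseq]; rw [if_neg (by omega), if_neg (by omega), if_pos (by omega)]
            rw [show K1 + 1 + 1 - (K1 + 2) = 0 by omega, hx20]
          have h3 : tsq (K1 + 1) = 1 := by
            simp only [htsq]
            rw [if_neg (by omega), if_neg (by omega)]
            simp
          rw [hseqv, h2, h3, dist_self]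
          exact hδ
        · have h1 : seq j = xs2 (j - (K1 + 2)) := by
            simp only [hseq]; rw [if_neg (by omega), if_neg (by omega), if_pos (by omega)]
          have h2 : seq (j + 1) = xs2 (j - (K1 + 2) + 1) := by
            simp only [hseq]; rw [if_neg (by omega), if_neg (by omega), if_pos (by omega)]
            congr 1
            omega
          have h3 : tsq j = ts2 (j - (K1 + 2)) := by
            simp only [htsq]
            rw [if_neg (by omega), if_neg (by omega), if_neg (by omega), if_pos (by omega)]
          rw [h1, h2, h3]
          exact hchain2 (j - (K1 + 2)) (by omega)
  set x : ℤ → M := fun i => seq ((i % (P : ℤ)).toNat) with hxdef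
  set tt : ℤ → ℝ := fun i => tsq ((i % (P : ℤ)).toNat) with httdef
  have hPpos : (0 : ℤ) < (P : ℤ) := by exact_mod_cast (by omega : 0 < P)
  have hmodlt : ∀ i : ℤ, ((i % (P : ℤ)).toNat) < P := by
    intro i
    have h1 := Int.emod_nonneg i (ne_of_gt hPpos)
    have h2 := Int.emod_lt_of_pos i hPpos
    omega
  have hxstep : ∀ i : ℤ, x (i + 1) = seq ((i % (P : ℤ)).toNat + 1) := by
    intro i
    have h0 : 0 ≤ i % (P : ℤ) := Int.emod_nonneg i (ne_of_gt hPpos)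
    have h1m : (1 : ℤ) % (P : ℤ) = 1 :=
      Int.emod_eq_of_lt (by norm_num) (by exact_mod_cast (show (1:ℕ) < P by omega))
    have hkey : (i + 1) % (P : ℤ) = ((i % (P : ℤ)) + 1) % (P : ℤ) := by
      rw [Int.add_emod i 1, h1m]
    set j := (i % (P : ℤ)).toNat with hjdef
    have hjc : i % (P : ℤ) = (j : ℤ) := (Int.toNat_of_nonneg h0).symm
    have hjlt : j < P := hmodlt i
    by_cases hc : j + 1 < P
    · have : (i + 1) % (P : ℤ) = ((j : ℤ) + 1) := by
        rw [hkey, hjc]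
        exact Int.emod_eq_of_lt (by positivity) (by exact_mod_cast hc)
      have h2 : ((i + 1) % (P : ℤ)).toNat = j + 1 := by rw [this]; omega
      show seq (((i + 1) % (P : ℤ)).toNat) = seq (j + 1)
      rw [h2]
    · have hjP : j + 1 = P := by omega
      have : (i + 1) % (P : ℤ) = 0 := by
        rw [hkey, hjc, show (j : ℤ) + 1 = (P : ℤ) by exact_mod_cast hjP, Int.emod_self]
      show seq (((i + 1) % (P : ℤ)).toNat) = seq (j + 1)
      rw [this, show ((0 : ℤ)).toNat = 0 from rfl, hseq0, hjP, hseqP]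
  have hxΛ : ∀ i, x i ∈ Λ := fun i => hseqΛ _
  have htt1 : ∀ i, 1 ≤ tt i := fun i => htsq1 _
  have hdist : ∀ i, dist (X (tt i) (x i)) (x (i + 1)) < δ := by
    intro i
    rw [hxstep i]
    exact hstep _ (hmodlt i)
  obtain ⟨z, hzΛ, h, hh, hspec⟩ := hshad x tt hxΛ htt1 hdist
  have hs0 : psumZ tt 0 = 0 := by simp [psumZ]
  have hx0 : x 0 = u := by
    simp only [hxdef, Int.zero_emod, Int.toNat_zero, hseq0]
  have hzu : dist z u < ε := by
    have h01 : psumZ tt (0 + 1) = psumZ tt 0 + tt 0 := psumZ_step' tt 0 le_rfl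
    have hsp := hspec 0 0 (le_of_eq hs0) (by rw [h01, hs0]; linarith [htt1 0])
    rw [hh.2.2.2, hX.2.1, hs0, sub_zero, hX.2.1, hx0] at hsp
    exact hsp
  set i0 : ℤ := ((K1 + 1 : ℕ) : ℤ) with hi0def
  have hi0nn : 0 ≤ i0 := Int.ofNat_nonneg _
  have hi0mod : (i0 % (P : ℤ)).toNat = K1 + 1 := by
    have hlt : i0 < (P : ℤ) := by rw [hi0def]; exact_mod_cast (show K1 + 1 < P by omega)
    rw [Int.emod_eq_of_lt hi0nn hlt, hi0def, Int.toNat_natCast]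
  have hxi0 : x i0 = v := by
    simp only [hxdef, hi0mod, hseqv]
  set τ := psumZ tt i0 with hτdef
  have hττ : psumZ tt (i0 + 1) = psumZ tt i0 + tt i0 := psumZ_step' tt i0 hi0nn
  have hsp := hspec i0 τ le_rfl (by rw [hττ]; linarith [htt1 i0])
  rw [sub_self, hX.2.1, hxi0] at hsp
  refine ⟨h τ, X (h τ) z, ⟨⟨z, ⟨?_, hzΛ⟩, rfl⟩, ?_, ?_⟩⟩
  · exact hball1 (by simpa [Metric.mem_ball] using hzu.trans_le (min_le_left _ _))
  · exact hball2 (by simpa [Metric.mem_ball] using hsp.trans_le (min_le_right _ _))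
  · rw [← hinv (h τ)]; exact ⟨z, hzΛ, rfl⟩
end

section
/- Let X be a flow and suppose z ∈ M, K ∈ ℝ satisfy lim_{i→∞} ∫_{i}^{i+1} d(X_{t+K}(z), X_t(x)) dt = 0 and lim_{i→∞} ∫_{−i}^{−i+1} d(X_t(z), X_t(y)) dt = 0, where the flow is uniformly continuous on M × compact time intervals. Then lim_{t→∞} d(X_t(X_K(z)), X_t(x)) = 0 and lim_{t→−∞} d(X_t(z), X_t(y)) = 0; that is, X_K(z) ∈ W^s(x) and z ∈ W^u(y). -/
open Filter Topology MeasureTheory Set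

variable {M : Type*} [MetricSpace M]

private lemma flow_unif (X : ℝ → M → M) [CompactSpace M]
    (hc : Continuous (fun p : ℝ × M => X p.1 p.2)) (h0 : ∀ m, X 0 m = m)
    {ε : ℝ} (hε : 0 < ε) :
    ∃ δ : ℝ, 0 < δ ∧ δ ≤ 1 ∧ ∀ s : ℝ, |s| ≤ δ → ∀ m : M, dist (X s m) m < ε := by
  have hK : IsCompact ((Set.Icc (-1:ℝ) 1) ×ˢ (Set.univ : Set M)) :=
    isCompact_Icc.prod isCompact_univ
  have huc : UniformContinuousOn (fun p : ℝ × M => X p.1 p.2)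
      ((Set.Icc (-1:ℝ) 1) ×ˢ (Set.univ : Set M)) :=
    hK.uniformContinuousOn_of_continuous hc.continuousOn
  rw [Metric.uniformContinuousOn_iff] at huc
  obtain ⟨δ₀, hδ₀, hδ⟩ := huc ε hε
  refine ⟨min (δ₀ / 2) 1, by positivity, min_le_right _ _, fun s hs m => ?_⟩
  have hs1 : |s| ≤ 1 := hs.trans (min_le_right _ _)
  have hs2 : |s| < δ₀ := lt_of_le_of_lt (hs.trans (min_le_left _ _)) (by linarith)
  have hmem : ((s, m) : ℝ × M) ∈ (Set.Icc (-1:ℝ) 1) ×ˢ (Set.univ : Set M) :=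
    ⟨abs_le.mp hs1, trivial⟩
  have hmem0 : ((0, m) : ℝ × M) ∈ (Set.Icc (-1:ℝ) 1) ×ˢ (Set.univ : Set M) :=
    ⟨⟨by norm_num, by norm_num⟩, trivial⟩
  have := hδ _ hmem _ hmem0 (by
    rw [Prod.dist_eq]
    simp [Real.dist_eq, hs2])
  simpa [h0 m] using this

private lemma key_forward (g : ℝ → ℝ) (hg : Continuous g) (hg0 : ∀ τ, 0 ≤ g τ)
    (hmod : ∀ ε : ℝ, 0 < ε →
      ∃ δ : ℝ, 0 < δ ∧ δ ≤ 1 ∧ ∀ τ h : ℝ, |h| ≤ δ → g τ ≤ g (τ + h) + ε / 2)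
    (hint : Tendsto (fun i : ℕ => ∫ τ in (i:ℝ)..((i:ℝ)+1), g τ) atTop (𝓝 0)) :
    Tendsto g atTop (𝓝 0) := by
  rw [Metric.tendsto_atTop]
  intro ε hε
  obtain ⟨δ, hδ0, hδ1, hδ⟩ := hmod ε hε
  rw [Metric.tendsto_atTop] at hint
  obtain ⟨N, hN⟩ := hint (δ * ε / 8) (by positivity)
  refine ⟨(N:ℝ) + 1, fun τ hτ => ?_⟩
  rw [Real.dist_eq, sub_zero, abs_of_nonneg (hg0 τ)]
  by_contra hcon
  push_neg at hcon
  have hτ0 : 0 ≤ τ := le_trans (by positivity) hτ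
  set i : ℕ := ⌊τ⌋.toNat with hi
  have hfl : ((i : ℕ) : ℝ) = ((⌊τ⌋ : ℤ) : ℝ) := by
    rw [hi]
    exact_mod_cast congrArg (fun n : ℤ => (n : ℝ))
      (Int.toNat_of_nonneg (Int.floor_nonneg.mpr hτ0))
  have hil : (i : ℝ) ≤ τ := by rw [hfl]; exact Int.floor_le τ
  have hiu : τ < (i : ℝ) + 1 := by rw [hfl]; exact Int.lt_floor_add_one τ
  have hiN : N ≤ i := by
    by_contra h
    push_neg at h
    have hNi : (i : ℝ) ≤ (N : ℝ) := by exact_mod_cast Nat.le_of_lt_succ (Nat.lt_succ_of_lt h)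
    linarith
  have hpt : ∀ σ ∈ Set.Icc τ (τ + δ), ε / 2 ≤ g σ := by
    intro σ hσ
    have habs : |σ - τ| ≤ δ := by
      rw [abs_of_nonneg (by linarith [hσ.1])]
      linarith [hσ.2]
    have h2 := hδ τ (σ - τ) habs
    have hστ : τ + (σ - τ) = σ := by ring
    rw [hστ] at h2
    linarith
  have hInt : ∀ a b : ℝ, IntervalIntegrable g MeasureTheory.volume a b :=
    fun a b => hg.intervalIntegrable a b
  have hI1 : ε * δ / 2 ≤ ∫ σ in τ..(τ + δ), g σ := by
    have := intervalIntegral.integral_mono_on (by linarith : τ ≤ τ + δ)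
      (intervalIntegrable_const) (hInt τ (τ + δ)) hpt
    simpa [mul_comm] using this
  have hI2 : (∫ σ in τ..(τ + δ), g σ) ≤ ∫ σ in (i:ℝ)..((i:ℝ)+2), g σ := by
    have e1 : (∫ σ in (i:ℝ)..τ, g σ) + (∫ σ in τ..(τ+δ), g σ) +
        (∫ σ in (τ+δ)..((i:ℝ)+2), g σ) = ∫ σ in (i:ℝ)..((i:ℝ)+2), g σ := by
      rw [intervalIntegral.integral_add_adjacent_intervals (hInt _ _) (hInt _ _),
        intervalIntegral.integral_add_adjacent_intervals (hInt _ _) (hInt _ _)]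
    have n1 : 0 ≤ ∫ σ in (i:ℝ)..τ, g σ :=
      intervalIntegral.integral_nonneg hil (fun u _ => hg0 u)
    have n2 : 0 ≤ ∫ σ in (τ+δ)..((i:ℝ)+2), g σ :=
      intervalIntegral.integral_nonneg (by linarith) (fun u _ => hg0 u)
    linarith
  have hI3 : (∫ σ in (i:ℝ)..((i:ℝ)+2), g σ) =
      (∫ σ in (i:ℝ)..((i:ℝ)+1), g σ) + ∫ σ in ((i:ℝ)+1)..((i:ℝ)+2), g σ := by
    rw [intervalIntegral.integral_add_adjacent_intervals (hInt _ _) (hInt _ _)]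
  have b1 : (∫ σ in (i:ℝ)..((i:ℝ)+1), g σ) < δ * ε / 8 := by
    have := hN i hiN
    rw [Real.dist_eq, sub_zero] at this
    exact lt_of_abs_lt this
  have b2 : (∫ σ in ((i:ℝ)+1)..((i:ℝ)+2), g σ) < δ * ε / 8 := by
    have hb := hN (i+1) (by omega)
    rw [Real.dist_eq, sub_zero] at hb
    push_cast at hb
    have h2 : ((i:ℝ)+1) + 1 = (i:ℝ) + 2 := by ring
    rw [h2] at hb
    exact lt_of_abs_lt hb
  nlinarith [hI1, hI2, hI3, b1, b2]

private lemma key_backward (g : ℝ → ℝ) (hg : Continuous g) (hg0 : ∀ τ, 0 ≤ g τ)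
    (hmod : ∀ ε : ℝ, 0 < ε →
      ∃ δ : ℝ, 0 < δ ∧ δ ≤ 1 ∧ ∀ τ h : ℝ, |h| ≤ δ → g τ ≤ g (τ + h) + ε / 2)
    (hint : Tendsto (fun i : ℕ => ∫ τ in (-(i:ℝ))..(-(i:ℝ)+1), g τ) atTop (𝓝 0)) :
    Tendsto g atBot (𝓝 0) := by
  set g' : ℝ → ℝ := fun τ => g (1 - τ) with hg'
  have hfor : Tendsto g' atTop (𝓝 0) := by
    apply key_forward g' (hg.comp (by continuity)) (fun τ => hg0 _)
    · intro ε hε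
      obtain ⟨δ, hδ0, hδ1, hδ⟩ := hmod ε hε
      refine ⟨δ, hδ0, hδ1, fun τ h hh => ?_⟩
      have h2 := hδ (1 - τ) (-h) (by rwa [abs_neg])
      have e : 1 - τ + -h = 1 - (τ + h) := by ring
      rw [e] at h2
      simpa [hg'] using h2
    · have heq : ∀ i : ℕ, (∫ τ in (i:ℝ)..((i:ℝ)+1), g' τ)
          = ∫ τ in (-(i:ℝ))..(-(i:ℝ)+1), g τ := by
        intro i
        have hc := intervalIntegral.integral_comp_sub_left (a := (i:ℝ)) (b := (i:ℝ)+1) g 1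
        rw [hg']
        simp only []
        rw [hc]
        congr 1 <;> ring
      simpa only [heq] using hint
  have hmap : Tendsto (fun τ : ℝ => 1 - τ) atBot atTop := by
    simpa [sub_eq_add_neg] using
      tendsto_atTop_add_const_left atBot (1:ℝ) tendsto_neg_atBot_atTop
  refine (hfor.comp hmap).congr fun τ => ?_
  simp [hg', Function.comp]

/-- vanishing of unit-interval integrals implies pointwise asymptotics:
`X_K(z) ∈ W^s(x)` and `z ∈ W^u(y)`. -/
theorem integral_decay_implies_stable_unstable [CompactSpace M]
    (X : ℝ → M → M) (hX : IsFlow X) (x y z : M) (K : ℝ)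
    (h1 : Tendsto (fun i : ℕ =>
        ∫ τ in (i : ℝ)..((i : ℝ) + 1), dist (X (τ + K) z) (X τ x)) atTop (𝓝 0))
    (h2 : Tendsto (fun i : ℕ =>
        ∫ τ in (-(i : ℝ))..(-(i : ℝ) + 1), dist (X τ z) (X τ y)) atTop (𝓝 0)) :
    (Tendsto (fun s : ℝ => dist (X s (X K z)) (X s x)) atTop (𝓝 0) ∧
      Tendsto (fun s : ℝ => dist (X s z) (X s y)) atBot (𝓝 0)) ∧
    X K z ∈ stableSet X x ∧ z ∈ unstableSet X y := by
  obtain ⟨hc, h0, hadd⟩ := hX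
  have hXc : ∀ (c : ℝ) (m : M), Continuous (fun τ : ℝ => X (τ + c) m) := fun c m =>
    hc.comp (((continuous_id.add continuous_const)).prodMk continuous_const)
  have hXc0 : ∀ m : M, Continuous (fun τ : ℝ => X τ m) := fun m =>
    hc.comp (continuous_id.prodMk continuous_const)
  -- forward function
  set g₁ : ℝ → ℝ := fun τ => dist (X (τ + K) z) (X τ x) with hg₁
  set g₂ : ℝ → ℝ := fun τ => dist (X τ z) (X τ y) with hg₂
  have hmod₁ : ∀ ε : ℝ, 0 < ε →
      ∃ δ : ℝ, 0 < δ ∧ δ ≤ 1 ∧ ∀ τ h : ℝ, |h| ≤ δ → g₁ τ ≤ g₁ (τ + h) + ε / 2 := by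
    intro ε hε
    obtain ⟨δ, hδ0, hδ1, hδ⟩ := flow_unif X hc h0 (by positivity : (0:ℝ) < ε/4)
    refine ⟨δ, hδ0, hδ1, fun τ h hh => ?_⟩
    have e1 : X (τ + h + K) z = X h (X (τ + K) z) := by
      rw [← hadd]; congr 1; ring
    have e2 : X (τ + h) x = X h (X τ x) := by
      rw [← hadd]; congr 1; ring
    have d1 : dist (X (τ + K) z) (X h (X (τ + K) z)) < ε / 4 := by
      rw [dist_comm]; exact hδ h hh _
    have d2 : dist (X h (X τ x)) (X τ x) < ε / 4 := hδ h hh _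
    have tri := dist_triangle4 (X (τ + K) z) (X h (X (τ + K) z))
      (X h (X τ x)) (X τ x)
    simp only [hg₁]
    rw [e1, e2]
    have tri2 := dist_triangle4 (X (τ + K) z) (X h (X (τ + K) z))
      (X h (X τ x)) (X τ x)
    calc dist (X (τ + K) z) (X τ x)
        ≤ dist (X (τ + K) z) (X h (X (τ + K) z)) + dist (X h (X (τ + K) z)) (X h (X τ x))
          + dist (X h (X τ x)) (X τ x) := dist_triangle4 _ _ _ _
      _ ≤ dist (X h (X (τ + K) z)) (X h (X τ x)) + ε / 2 := by linarith
  have hmod₂ : ∀ ε : ℝ, 0 < ε →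
      ∃ δ : ℝ, 0 < δ ∧ δ ≤ 1 ∧ ∀ τ h : ℝ, |h| ≤ δ → g₂ τ ≤ g₂ (τ + h) + ε / 2 := by
    intro ε hε
    obtain ⟨δ, hδ0, hδ1, hδ⟩ := flow_unif X hc h0 (by positivity : (0:ℝ) < ε/4)
    refine ⟨δ, hδ0, hδ1, fun τ h hh => ?_⟩
    have e1 : X (τ + h) z = X h (X τ z) := by
      rw [← hadd]; congr 1; ring
    have e2 : X (τ + h) y = X h (X τ y) := by
      rw [← hadd]; congr 1; ring
    have d1 : dist (X τ z) (X h (X τ z)) < ε / 4 := by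
      rw [dist_comm]; exact hδ h hh _
    have d2 : dist (X h (X τ y)) (X τ y) < ε / 4 := hδ h hh _
    simp only [hg₂]
    rw [e1, e2]
    calc dist (X τ z) (X τ y)
        ≤ dist (X τ z) (X h (X τ z)) + dist (X h (X τ z)) (X h (X τ y))
          + dist (X h (X τ y)) (X τ y) := dist_triangle4 _ _ _ _
      _ ≤ dist (X h (X τ z)) (X h (X τ y)) + ε / 2 := by linarith
  have c1' : Tendsto g₁ atTop (𝓝 0) :=
    key_forward g₁ ((hXc K z).dist (hXc0 x)) (fun τ => dist_nonneg) hmod₁ h1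
  have c2 : Tendsto g₂ atBot (𝓝 0) :=
    key_backward g₂ ((hXc0 z).dist (hXc0 y)) (fun τ => dist_nonneg) hmod₂ h2
  have c1 : Tendsto (fun s : ℝ => dist (X s (X K z)) (X s x)) atTop (𝓝 0) :=
    c1'.congr fun s => by rw [hg₁]; simp only []; rw [hadd]
  refine ⟨⟨c1, c2⟩, ?_, ?_⟩
  · show Tendsto (fun s : ℝ => dist (X s x) (X s (X K z))) atTop (𝓝 0)
    exact c1.congr fun s => dist_comm _ _
  · show Tendsto (fun s : ℝ => dist (X (-s) y) (X (-s) z)) atTop (𝓝 0)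
    have := c2.comp tendsto_neg_atTop_atBot
    exact this.congr fun s => dist_comm _ _
end
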